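/- arXiv:2505.08677 — 2 statements merged into one kernel-verified Lean document; each statement's English description precedes it below -/
import Mathlib

section
/- Let A be the N×N tridiagonal matrix with A_{ii} = λ_i + μ_i, A_{i,i+1} = −λ_i, A_{i,i−1} = −μ_i (indices in {1,…,N}), where μ_i > 0 for all i, λ_i ≥ 0, λ_N = 0. Then A is invertible and (A^{-1})_{ij} = ζ_{ij} := Σ_{ℓ=1}^{min(i,j)} η_{ℓj}, where η_{ℓj} = (λ_ℓ ⋯ λ_{j−1})/(μ_ℓ ⋯ μ_j) for ℓ ≤ j (empty product = 1). -/
/-!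
Row by row, `A ζ = 1` is the backward equation
`(λ_i + μ_i) ζ_{ij} - λ_i ζ_{i+1,j} - μ_i ζ_{i-1,j} = δ_{ij}`, with `ζ_{0j} = 0` and with
`λ_N = 0` making up for the missing superdiagonal entry in the last row. Since
`ζ_{ij} - ζ_{i-1,j} = η_{ij}` for `i ≤ j` and `0` otherwise, its left side is
`μ_i η_{ij} - λ_i η_{i+1,j}`, which vanishes for `i < j` as `μ_i η_{ij} = λ_i η_{i+1,j}`, equals
`μ_j η_{jj} = 1` for `i = j`, and is `0` for `i > j`. A one-sided inverse of a square matrix is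
two-sided.
-/

open Matrix Finset

noncomputable def sojournEta (lam mu : ℕ → ℝ) (l j : ℕ) : ℝ :=
  (∏ k ∈ Ico l j, lam k) / ∏ k ∈ Icc l j, mu k

noncomputable def sojournTime (lam mu : ℕ → ℝ) (i j : ℕ) : ℝ :=
  ∑ l ∈ Icc 1 (min i j), sojournEta lam mu l j

lemma sojournTime_zero_left (lam mu : ℕ → ℝ) (j : ℕ) : sojournTime lam mu 0 j = 0 := by
  simp [sojournTime]

lemma sojournTime_succ_left_sub (lam mu : ℕ → ℝ) (i j : ℕ) :
    sojournTime lam mu (i + 1) j - sojournTime lam mu i j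
      = if i + 1 ≤ j then sojournEta lam mu (i + 1) j else 0 := by
  unfold sojournTime
  split_ifs with h
  · rw [min_eq_left h, min_eq_left (by omega), sum_Icc_succ_top (by omega), add_sub_cancel_left]
  · rw [min_eq_right (by omega), min_eq_right (by omega), sub_self]

lemma mu_mul_sojournEta_self (lam : ℕ → ℝ) {mu : ℕ → ℝ} {i : ℕ} (hi : mu i ≠ 0) :
    mu i * sojournEta lam mu i i = 1 := by
  simp [sojournEta, hi]

lemma mu_mul_sojournEta_of_lt (lam : ℕ → ℝ) {mu : ℕ → ℝ} {i j : ℕ} (hij : i < j)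
    (hmu : ∀ k ∈ Icc i j, mu k ≠ 0) :
    mu i * sojournEta lam mu i j = lam i * sojournEta lam mu (i + 1) j := by
  have hlam : ∏ k ∈ Ico i j, lam k = lam i * ∏ k ∈ Ico (i + 1) j, lam k :=
    prod_eq_prod_Ico_succ_bot hij lam
  have hmu_prod : ∏ k ∈ Icc i j, mu k = mu i * ∏ k ∈ Icc (i + 1) j, mu k := by
    rw [← Ico_add_one_right_eq_Icc, ← Ico_add_one_right_eq_Icc]
    exact prod_eq_prod_Ico_succ_bot (by omega) mu
  have hmu_i : mu i ≠ 0 := hmu i (by simp [hij.le])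
  have hmu_tail : ∏ k ∈ Icc (i + 1) j, mu k ≠ 0 :=
    prod_ne_zero_iff.mpr fun k hk => hmu k (by simp at hk ⊢; omega)
  rw [sojournEta, sojournEta, hlam, hmu_prod]
  field_simp

lemma sojournTime_backward_equation (lam : ℕ → ℝ) {mu : ℕ → ℝ} (i j : ℕ)
    (hmu : ∀ k ∈ Icc (i + 1) j, mu k ≠ 0) :
    (lam (i + 1) + mu (i + 1)) * sojournTime lam mu (i + 1) j
      - lam (i + 1) * sojournTime lam mu (i + 2) j - mu (i + 1) * sojournTime lam mu i j
      = if i + 1 = j then 1 else 0 := by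
  have hdiff : (lam (i + 1) + mu (i + 1)) * sojournTime lam mu (i + 1) j
      - lam (i + 1) * sojournTime lam mu (i + 2) j - mu (i + 1) * sojournTime lam mu i j
      = mu (i + 1) * (sojournTime lam mu (i + 1) j - sojournTime lam mu i j)
        - lam (i + 1) * (sojournTime lam mu (i + 1 + 1) j - sojournTime lam mu (i + 1) j) := by
    ring
  rw [hdiff, sojournTime_succ_left_sub, sojournTime_succ_left_sub]
  rcases lt_trichotomy (i + 1) j with h | rfl | h
  · rw [if_pos h.le, if_pos (show i + 1 + 1 ≤ j from h), if_neg h.ne,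
      mu_mul_sojournEta_of_lt lam h hmu, sub_self]
  · rw [if_pos le_rfl, if_neg (by omega), if_pos rfl,
      mu_mul_sojournEta_self lam (hmu _ (by simp)), mul_zero, sub_zero]
  · rw [if_neg (by omega), if_neg (by omega), if_neg h.ne']
    ring

lemma sum_tridiagonal_row_mul {N : ℕ} (i : Fin N) (a b c : ℝ) (g : ℕ → ℝ)
    (hb : (i : ℕ) + 1 = N → b = 0) (hg : g 0 = 0) :
    ∑ k : Fin N, (if (k : ℕ) = i then a else if (k : ℕ) = i + 1 then b
        else if (k : ℕ) + 1 = i then c else 0) * g (k + 1)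
      = a * g (i + 1) + b * g (i + 2) + c * g i := by
  have hterm : ∀ k : ℕ, (if k = i then a else if k = i + 1 then b
        else if k + 1 = i then c else 0) * g (k + 1)
      = (if k = i then a * g (i + 1) else 0) + (if k = i + 1 then b * g (i + 2) else 0)
        + (if k + 1 = i then c * g i else 0) := by
    intro k
    split_ifs <;> first | omega | simp_all
  have hsub : ∑ k ∈ range N, (if k + 1 = i then c * g i else 0)
      = c * g i - if 0 = (i : ℕ) then c * g i else 0 := by
    rw [eq_sub_iff_add_eq, ← sum_range_succ' (fun k => if k = (i : ℕ) then c * g i else 0),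
      sum_ite_eq', if_pos (mem_range.mpr (by omega))]
  have hlast : (if (i : ℕ) + 1 < N then b * g (i + 2) else 0) = b * g (i + 2) := by
    split_ifs with h
    · rfl
    · rw [hb (by omega), zero_mul]
  have hfirst : (if 0 = (i : ℕ) then c * g i else 0) = 0 := by
    split_ifs with h
    · rw [← h, hg, mul_zero]
    · rfl
  rw [Fin.sum_univ_eq_sum_range (fun k => (if k = (i : ℕ) then a else if k = i + 1 then b
        else if k + 1 = i then c else 0) * g (k + 1))]
  simp only [hterm, sum_add_distrib, sum_ite_eq', hsub, mem_range, i.isLt, if_true]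
  rw [hlast, hfirst]
  ring

theorem tridiagonal_inverse_sojourn_general (N : ℕ) (lam mu : ℕ → ℝ)
    (hmu : ∀ i, 1 ≤ i → i ≤ N → 0 < mu i)
    (hlamN : lam N = 0) :
    let A : Matrix (Fin N) (Fin N) ℝ := fun i j =>
      if (j : ℕ) = (i : ℕ) then lam ((i : ℕ) + 1) + mu ((i : ℕ) + 1)
      else if (j : ℕ) = (i : ℕ) + 1 then -lam ((i : ℕ) + 1)
      else if (j : ℕ) + 1 = (i : ℕ) then -mu ((i : ℕ) + 1)
      else 0
    let Z : Matrix (Fin N) (Fin N) ℝ := fun i j =>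
      ∑ ℓ ∈ Finset.Icc 1 (min ((i : ℕ) + 1) ((j : ℕ) + 1)),
        (∏ k ∈ Finset.Ico ℓ ((j : ℕ) + 1), lam k)
          / (∏ k ∈ Finset.Icc ℓ ((j : ℕ) + 1), mu k)
    A * Z = 1 ∧ Z * A = 1 := by
  intro A Z
  have hAZ : A * Z = 1 := by
    ext i j
    have hrow := sum_tridiagonal_row_mul i (lam (i + 1) + mu (i + 1)) (-lam (i + 1))
      (-mu (i + 1)) (fun n => sojournTime lam mu n (j + 1))
      (fun h => by rw [h, hlamN, neg_zero]) (sojournTime_zero_left lam mu _)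
    have hbackward := sojournTime_backward_equation lam i (j + 1) fun k hk =>
      (hmu k (by simp at hk; omega) (by simp at hk; omega)).ne'
    have hdiag : i = j ↔ (i : ℕ) + 1 = j + 1 := by simp [Fin.ext_iff]
    rw [mul_apply, one_apply]
    refine hrow.trans ?_
    rw [if_congr hdiag rfl rfl, ← hbackward]
    ring
  exact ⟨hAZ, mul_eq_one_comm.mp hAZ⟩

/-- The tridiagonal matrix `A` (indices `1,…,N`, realised as `Fin N` via `i ↦ i+1`)
with `A_{ii} = λ_i + μ_i`, `A_{i,i+1} = -λ_i`, `A_{i,i-1} = -μ_i`, where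
`μ_i > 0`, `λ_i ≥ 0`, `λ_N = 0`, is invertible with inverse entries
`ζ_{ij} = Σ_{ℓ=1}^{min(i,j)} (λ_ℓ⋯λ_{j-1})/(μ_ℓ⋯μ_j)`. -/
theorem tridiagonal_inverse_sojourn (N : ℕ) (lam mu : ℕ → ℝ)
    (hmu : ∀ i, 1 ≤ i → i ≤ N → 0 < mu i) (hlam : ∀ i, 0 ≤ lam i)
    (hlamN : lam N = 0) :
    let A : Matrix (Fin N) (Fin N) ℝ := fun i j =>
      if (j : ℕ) = (i : ℕ) then lam ((i : ℕ) + 1) + mu ((i : ℕ) + 1)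
      else if (j : ℕ) = (i : ℕ) + 1 then -lam ((i : ℕ) + 1)
      else if (j : ℕ) + 1 = (i : ℕ) then -mu ((i : ℕ) + 1)
      else 0
    let Z : Matrix (Fin N) (Fin N) ℝ := fun i j =>
      ∑ ℓ ∈ Finset.Icc 1 (min ((i : ℕ) + 1) ((j : ℕ) + 1)),
        (∏ k ∈ Finset.Ico ℓ ((j : ℕ) + 1), lam k)
          / (∏ k ∈ Finset.Icc ℓ ((j : ℕ) + 1), mu k)
    A * Z = 1 ∧ Z * A = 1 :=
  tridiagonal_inverse_sojourn_general N lam mu hmu hlamN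
end

section
/- For the stochastic logistic chain with rates λ_y = s y(N−y)/N, μ_y = u y on {0,…,N}, the expected tree length (expected path integral of the identity up to absorption) started from n ∈ {1,…,N} equals E[L_n] = Σ_{m=0}^{N−1} (1/u)(s/(Nu))^m · (N^{\underline{m+1}} − (N−n)^{\underline{m+1}})/(m+1). -/
/-!
Cancelling the factor `j` and swapping the two sums turns the left side into
`Σ_{ℓ=1}^n Σ_m (1/u) (s/(Nu))^m (N-ℓ)^{\underline m}`, where `m` may run over all of `m < N`
since the falling factorial vanishes for `m > N - ℓ`. For fixed `m`, the discrete derivative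
`(a+1)^{\underline{m+1}} - a^{\underline{m+1}} = (m+1) a^{\underline m}` telescopes
`Σ_{ℓ=1}^n (N-ℓ)^{\underline m}` to `(N^{\underline{m+1}} - (N-n)^{\underline{m+1}}) / (m+1)`.
-/

open Finset

theorem Nat.succ_descFactorial_succ_eq_add (a m : ℕ) :
    (a + 1).descFactorial (m + 1) = a.descFactorial (m + 1) + (m + 1) * a.descFactorial m := by
  rw [Nat.succ_descFactorial_succ, Nat.descFactorial_succ, ← Nat.add_mul]
  rcases le_or_gt m a with h | h
  · congr 1
    omega
  · simp [Nat.descFactorial_eq_zero_iff_lt.2 h]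

theorem Nat.descFactorial_succ_eq_add_sum {N n : ℕ} (m : ℕ) (hn : n ≤ N) :
    N.descFactorial (m + 1) =
      (N - n).descFactorial (m + 1) + (m + 1) * ∑ ℓ ∈ Icc 1 n, (N - ℓ).descFactorial m := by
  induction n with
  | zero => simp
  | succ n ih =>
    rw [ih (by omega), sum_Icc_succ_top (by omega), show N - n = N - (n + 1) + 1 by omega,
      Nat.succ_descFactorial_succ_eq_add]
    ring

theorem Finset.sum_Icc_sum_Icc_min_sub {M : Type*} [AddCommMonoid M] (f : ℕ → ℕ → M) (n N : ℕ) :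
    ∑ j ∈ Icc 1 N, ∑ ℓ ∈ Icc 1 (min n j), f ℓ (j - ℓ) =
      ∑ ℓ ∈ Icc 1 n, ∑ m ∈ range (N + 1 - ℓ), f ℓ m := by
  rw [sum_comm' (t' := Icc 1 n) (s' := fun ℓ => Icc ℓ N)
    (by intro j ℓ; simp only [mem_Icc, le_min_iff]; omega)]
  refine sum_congr rfl fun ℓ _ => ?_
  rw [← Ico_add_one_right_eq_Icc, sum_Ico_eq_sum_range]
  simp

theorem expected_tree_length_general (N n : ℕ) (s u : ℝ) (hnN : n ≤ N) :
    ∑ j ∈ Finset.Icc 1 N,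
        (∑ ℓ ∈ Finset.Icc 1 (min n j),
          1 / (u * (j : ℝ)) * (s / ((N : ℝ) * u)) ^ (j - ℓ)
            * ((N - ℓ).descFactorial (j - ℓ) : ℝ)) * (j : ℝ)
      = ∑ m ∈ Finset.range N, (1 / u) * (s / ((N : ℝ) * u)) ^ m
          * ((N.descFactorial (m + 1) : ℝ) - ((N - n).descFactorial (m + 1) : ℝ))
          / ((m : ℝ) + 1) := by
  set x := s / ((N : ℝ) * u)
  set g : ℕ → ℕ → ℝ := fun ℓ m => 1 / u * x ^ m * ((N - ℓ).descFactorial m : ℝ)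
  have cancel_j : ∀ j ∈ Icc 1 N, (∑ ℓ ∈ Icc 1 (min n j),
      1 / (u * (j : ℝ)) * x ^ (j - ℓ) * ((N - ℓ).descFactorial (j - ℓ) : ℝ)) * (j : ℝ) =
      ∑ ℓ ∈ Icc 1 (min n j), g ℓ (j - ℓ) := by
    intro j hj
    have hj0 : (j : ℝ) ≠ 0 := Nat.cast_ne_zero.2 (by simp only [mem_Icc] at hj; omega)
    have hj : 1 / (u * j) * j = 1 / u := by field_simp
    rw [sum_mul]
    refine sum_congr rfl fun ℓ _ => ?_
    simp only [g]
    linear_combination (x ^ (j - ℓ) * ((N - ℓ).descFactorial (j - ℓ) : ℝ)) * hj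
  have extend_range : ∀ ℓ ∈ Icc 1 n, ∑ m ∈ range (N + 1 - ℓ), g ℓ m = ∑ m ∈ range N, g ℓ m := by
    intro ℓ hℓ
    simp only [mem_Icc] at hℓ
    refine sum_subset (range_subset_range.2 (by omega)) fun m _ hm => ?_
    simp only [mem_range] at hm
    simp [g, Nat.descFactorial_eq_zero_iff_lt.2 (by omega : N - ℓ < m)]
  have telescope : ∀ m ∈ range N, 1 / u * x ^ m *
      ((N.descFactorial (m + 1) : ℝ) - ((N - n).descFactorial (m + 1) : ℝ)) / ((m : ℝ) + 1) =
      ∑ ℓ ∈ Icc 1 n, g ℓ m := by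
    intro m _
    rw [Nat.descFactorial_succ_eq_add_sum m hnN]
    simp only [g, ← mul_sum]
    push_cast
    field_simp
    ring
  rw [sum_congr rfl cancel_j, sum_Icc_sum_Icc_min_sub, sum_congr rfl extend_range,
    sum_congr rfl telescope, sum_comm]

/-- Expected tree length for the stochastic logistic chain:
`E[L_n] = Σ_{j=1}^N ζ_{nj}·j` with
`ζ_{nj} = Σ_{ℓ=1}^{min(n,j)} (1/(uj))(s/(Nu))^{j-ℓ}(N-ℓ)^{\underline{j-ℓ}}`
evaluates to the closed form
`Σ_{m=0}^{N-1} (1/u)(s/(Nu))^m (N^{\underline{m+1}} - (N-n)^{\underline{m+1}})/(m+1)`. -/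
theorem expected_tree_length (N n : ℕ) (s u : ℝ) (hs : 0 < s) (hu : 0 < u)
    (hn1 : 1 ≤ n) (hnN : n ≤ N) :
    ∑ j ∈ Finset.Icc 1 N,
        (∑ ℓ ∈ Finset.Icc 1 (min n j),
          1 / (u * (j : ℝ)) * (s / ((N : ℝ) * u)) ^ (j - ℓ)
            * ((N - ℓ).descFactorial (j - ℓ) : ℝ)) * (j : ℝ)
      = ∑ m ∈ Finset.range N, (1 / u) * (s / ((N : ℝ) * u)) ^ m
          * ((N.descFactorial (m + 1) : ℝ) - ((N - n).descFactorial (m + 1) : ℝ))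
          / ((m : ℝ) + 1) :=
  expected_tree_length_general N n s u hnN
end
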